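/- Let n, s, δ be positive integers with s ≡ 2 (mod 3), δ ≡ 1 (mod 3), δ + 1 ≤ s, 5s ≤ 3n − 2, and 3n ≥ 20δ + 53. Then the number of edges of K_s ∨ (K_{n−⌊5s/3⌋−1} ∪ (⌊2s/3⌋+1)·K_1) is at most the number of edges of K_δ ∨ (K_{n−⌊5δ/3⌋−1} ∪ (⌊2δ/3⌋+1)·K_1). -/

import Mathlib

open SimpleGraph

/-- The number of isolated vertices of the induced subgraph `G - S`:
vertices outside `S` with no neighbor outside `S`. -/
noncomputable def isolatedCount {V : Type*} (G : SimpleGraph V) (S : Finset V) : ℕ :=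
  {v : V | v ∉ S ∧ ∀ w ∉ S, ¬ G.Adj v w}.ncard

/-- `G` has a `{P₃, P₄, P₅}`-factor: a spanning subgraph each of whose connected
components is isomorphic to a path on 3, 4 or 5 vertices. -/
def HasP345Factor {V : Type*} (G : SimpleGraph V) : Prop :=
  ∃ H : SimpleGraph V, H ≤ G ∧
    ∀ c : H.ConnectedComponent, ∃ k, (k = 3 ∨ k = 4 ∨ k = 5) ∧
      Nonempty ((SimpleGraph.induce c.supp H) ≃g SimpleGraph.pathGraph k)

/-- The graph `K_s ∨ (K_{n-⌊5s/3⌋-1} ∪ (⌊2s/3⌋+1)·K_1)` on `n` vertices: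
vertices `< s` form the clique `K_s` joined with everything, vertices in
`[s, n - ⌊2s/3⌋ - 1)` form the clique `K_{n-⌊5s/3⌋-1}`, and the remaining
`⌊2s/3⌋ + 1` vertices are isolated in the second part of the join. -/
def extremalGraph (n s : ℕ) : SimpleGraph (Fin n) where
  Adj v w := v ≠ w ∧ ((v : ℕ) < s ∨ (w : ℕ) < s ∨
    ((v : ℕ) < n - 2 * s / 3 - 1 ∧ (w : ℕ) < n - 2 * s / 3 - 1))
  symm := ⟨fun v w h => ⟨h.1.symm, by tauto⟩⟩
  loopless := ⟨fun v h => h.1 rfl⟩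

/-- The spectral radius of a graph: the largest eigenvalue of its adjacency
matrix over the reals. -/
noncomputable def specRad {V : Type*} [Finite V] (G : SimpleGraph V) : ℝ :=
  letI := Fintype.ofFinite V
  letI := Classical.decEq V
  letI := Classical.decRel G.Adj
  sSup (spectrum ℝ (G.adjMatrix ℝ))

open Finset

instance (n s : ℕ) : DecidableRel (extremalGraph n s).Adj :=
  fun v w => inferInstanceAs (Decidable (v ≠ w ∧ _))

lemma card_filter_lt (n m : ℕ) (h : m ≤ n) :
    (Finset.univ.filter (fun w : Fin n => (w : ℕ) < m)).card = m := by
  have : (Finset.univ.filter (fun w : Fin n => (w : ℕ) < m)) =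
      (Finset.range m).attachFin (fun x hx => lt_of_lt_of_le (Finset.mem_range.mp hx) h) := by
    ext w; simp
  rw [this, Finset.card_attachFin, Finset.card_range]

lemma deg_lo (n s : ℕ) (v : Fin n) (hv : (v : ℕ) < s) :
    (extremalGraph n s).degree v = n - 1 := by
  have : (extremalGraph n s).neighborFinset v = Finset.univ.erase v := by
    ext w
    simp only [mem_neighborFinset, Finset.mem_erase, Finset.mem_univ, and_true]
    constructor
    · rintro ⟨h1, _⟩; exact fun h => h1 h.symm
    · intro h; exact ⟨fun h' => h h'.symm, Or.inl hv⟩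
  rw [SimpleGraph.degree, this, Finset.card_erase_of_mem (Finset.mem_univ v),
    Finset.card_univ, Fintype.card_fin]

lemma deg_mid (n s : ℕ) (v : Fin n) (hm : s ≤ n - 2 * s / 3 - 1)
    (hv1 : s ≤ (v : ℕ)) (hv2 : (v : ℕ) < n - 2 * s / 3 - 1) :
    (extremalGraph n s).degree v = (n - 2 * s / 3 - 1) - 1 := by
  set m := n - 2 * s / 3 - 1 with hmdef
  have hmn : m ≤ n := by omega
  have : (extremalGraph n s).neighborFinset v =
      (Finset.univ.filter (fun w : Fin n => (w : ℕ) < m)).erase v := by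
    ext w
    simp only [mem_neighborFinset, Finset.mem_erase, Finset.mem_filter, Finset.mem_univ,
      true_and]
    constructor
    · rintro ⟨h1, h2⟩
      refine ⟨fun h => h1 h.symm, ?_⟩
      rcases h2 with h | h | ⟨_, h⟩ <;> omega
    · rintro ⟨h1, h2⟩
      exact ⟨fun h => h1 h.symm, Or.inr (Or.inr ⟨hv2, h2⟩)⟩
  rw [SimpleGraph.degree, this, Finset.card_erase_of_mem, card_filter_lt n m hmn]
  simp only [Finset.mem_filter, Finset.mem_univ, true_and]; exact hv2

lemma deg_hi (n s : ℕ) (v : Fin n) (hm : s ≤ n - 2 * s / 3 - 1)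
    (hv : n - 2 * s / 3 - 1 ≤ (v : ℕ)) :
    (extremalGraph n s).degree v = s := by
  set m := n - 2 * s / 3 - 1 with hmdef
  have : (extremalGraph n s).neighborFinset v =
      Finset.univ.filter (fun w : Fin n => (w : ℕ) < s) := by
    ext w
    simp only [mem_neighborFinset, Finset.mem_filter, Finset.mem_univ, true_and]
    constructor
    · rintro ⟨h1, h2⟩
      rcases h2 with h | h | ⟨h, _⟩ <;> omega
    · intro h
      have : (w : ℕ) ≠ (v : ℕ) := by omega
      exact ⟨fun he => this (by rw [he]), Or.inr (Or.inl h)⟩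
  rw [SimpleGraph.degree, this, card_filter_lt n s (by omega)]

lemma twice_edges (n s : ℕ) (hm : s ≤ n - 2 * s / 3 - 1) :
    2 * (extremalGraph n s).edgeFinset.card =
      s * (n - 1) + ((n - 2 * s / 3 - 1) - s) * ((n - 2 * s / 3 - 1) - 1)
        + (n - (n - 2 * s / 3 - 1)) * s := by
  set m := n - 2 * s / 3 - 1 with hmdef
  have hmn : m ≤ n := by omega
  rw [← SimpleGraph.sum_degrees_eq_twice_card_edges]
  have : ∀ v : Fin n, (extremalGraph n s).degree v =
      (if (v : ℕ) < s then n - 1 else if (v : ℕ) < m then m - 1 else s) := by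
    intro v
    by_cases h1 : (v : ℕ) < s
    · rw [if_pos h1, deg_lo n s v h1]
    · by_cases h2 : (v : ℕ) < m
      · rw [if_neg h1, if_pos h2, deg_mid n s v hm (by omega) h2]
      · rw [if_neg h1, if_neg h2, deg_hi n s v hm (by omega)]
  rw [Finset.sum_congr rfl (fun v _ => this v)]
  rw [Fin.sum_univ_eq_sum_range (fun i => if i < s then n - 1 else if i < m then m - 1 else s)]
  rw [← Finset.sum_range_add_sum_Ico _ (le_trans hm hmn),
    ← Finset.sum_Ico_consecutive _ hm hmn]
  have e1 : ∑ i ∈ Finset.range s, (if i < s then n - 1 else if i < m then m - 1 else s)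
      = s * (n - 1) := by
    rw [Finset.sum_congr rfl (fun i hi => if_pos (Finset.mem_range.mp hi))]
    simp [mul_comm]
  have e2 : ∑ i ∈ Finset.Ico s m, (if i < s then n - 1 else if i < m then m - 1 else s)
      = (m - s) * (m - 1) := by
    have h : ∀ i ∈ Finset.Ico s m,
        (if i < s then n - 1 else if i < m then m - 1 else s) = m - 1 := by
      intro i hi
      have := Finset.mem_Ico.mp hi
      rw [if_neg (by omega), if_pos (by omega)]
    rw [Finset.sum_congr rfl h, Finset.sum_const, Nat.card_Ico, smul_eq_mul]
  have e3 : ∑ i ∈ Finset.Ico m n, (if i < s then n - 1 else if i < m then m - 1 else s)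
      = (n - m) * s := by
    have h : ∀ i ∈ Finset.Ico m n,
        (if i < s then n - 1 else if i < m then m - 1 else s) = s := by
      intro i hi
      have := Finset.mem_Ico.mp hi
      rw [if_neg (by omega), if_neg (by omega)]
    rw [Finset.sum_congr rfl h, Finset.sum_const, Nat.card_Ico, smul_eq_mul]
  rw [e1, e2, e3]
  omega


set_option maxHeartbeats 1000000 in
theorem stmt10 (n s δ : ℕ) (hn1 : 1 ≤ n) (hs1 : 1 ≤ s) (hδ1 : 1 ≤ δ)
    (hs : s % 3 = 2) (hδ : δ % 3 = 1) (hsδ : δ + 1 ≤ s)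
    (hsn : 5 * s + 2 ≤ 3 * n) (hn : 20 * δ + 53 ≤ 3 * n) :
    (extremalGraph n s).edgeSet.ncard ≤ (extremalGraph n δ).edgeSet.ncard := by
  have hms : s ≤ n - 2 * s / 3 - 1 := by omega
  have hmδ : δ ≤ n - 2 * δ / 3 - 1 := by omega
  have Es := twice_edges n s hms
  have Eδ := twice_edges n δ hmδ
  have h1 : (extremalGraph n s).edgeSet.ncard = (extremalGraph n s).edgeFinset.card := by
    rw [← SimpleGraph.coe_edgeFinset, Set.ncard_coe_finset]
  have h2 : (extremalGraph n δ).edgeSet.ncard = (extremalGraph n δ).edgeFinset.card := by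
    rw [← SimpleGraph.coe_edgeFinset, Set.ncard_coe_finset]
  rw [h1, h2]
  obtain ⟨A, hA⟩ : ∃ A, (extremalGraph n s).edgeFinset.card = A := ⟨_, rfl⟩
  obtain ⟨B, hB⟩ : ∃ B, (extremalGraph n δ).edgeFinset.card = B := ⟨_, rfl⟩
  rw [hA] at Es; rw [hB] at Eδ; rw [hA, hB]
  clear hA hB h1 h2 hms hmδ
  obtain ⟨j, rfl⟩ : ∃ j, δ = 3 * j + 1 := ⟨δ / 3, by omega⟩
  obtain ⟨c, rfl⟩ : ∃ c, s = 3 * (j + c) + 2 := ⟨(s - 3 * j - 2) / 3, by omega⟩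
  obtain ⟨a, rfl⟩ : ∃ a, n = 5 * (j + c) + 4 + a := ⟨n - 5 * (j + c) - 4, by omega⟩
  have key : 15 * j + 21 ≤ 5 * c + a := by omega
  set n := 5 * (j + c) + 4 + a with hn'
  have r1 : n - 1 = 5 * (j + c) + 3 + a := by omega
  have r2 : n - 2 * (3 * (j + c) + 2) / 3 - 1 - (3 * (j + c) + 2) = a := by omega
  have r3 : n - 2 * (3 * (j + c) + 2) / 3 - 1 - 1 = 3 * (j + c) + 1 + a := by omega
  have r4 : n - (n - 2 * (3 * (j + c) + 2) / 3 - 1) = 2 * (j + c) + 2 := by omega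
  have r5 : n - 2 * (3 * j + 1) / 3 - 1 - (3 * j + 1) = 5 * c + 2 + a := by omega
  have r6 : n - 2 * (3 * j + 1) / 3 - 1 - 1 = 3 * j + 5 * c + 2 + a := by omega
  have r7 : n - (n - 2 * (3 * j + 1) / 3 - 1) = 2 * j + 1 := by omega
  rw [r1, r2, r3, r4] at Es
  rw [r1, r5, r6, r7] at Eδ
  have hfin : 2 * A ≤ 2 * B := by
    rw [Es, Eδ]
    nlinarith [key, Nat.zero_le (j * c), Nat.zero_le (j * a),
      Nat.zero_le (c * a), Nat.zero_le (c * c), Nat.zero_le (a * a)]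
  omega
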